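/- There exist a finite set Π of pairs (j,r) with j ∈ F and r an integer satisfying ρ_min ≤ r ≤ ρ_max, a designated root pair (j₀, ρ_max) ∈ Π, a map parent : Π → Π, and a family of areas A : Π → Set V, with the following properties. (1) parent(j₀,ρ_max) = (j₀,ρ_max), and every non-root (j,r) ∈ Π satisfies parent(j,r) = (j',r+1) for some (j',r+1) ∈ Π with B(j,7·5^r) ⊆ B(j',7·5^{r+1}); consequently every pair reaches the root in at most ρ_max − ρ_min parent steps, and every pair has at most 2^{4κ} children (pairs of which it is the parent). (2) A(j,r) ⊆ B(j,7·5^r) for all (j,r) ∈ Π, A(u) ⊆ A(parent(u)) for all u ∈ Π, and for any two pairs u,v ∈ Π neither of which is an iterated-parent ancestor of the other, A(u) ∩ A(v) = ∅; in particular the family {A(u)}_{u∈Π} is laminar. (3) For every client set C ⊆ V and every finite collection 𝔅 of pairs (j,R) with j ∈ F and R ≥ 0 whose closed balls B(j,R) cover C, there exists S ⊆ Π with C ⊆ ⋃_{(j,r)∈S} A(j,r) and Σ_{(j,r)∈S} (f_j + 7·5^r) ≤ 80·2^{2κ} · Σ_{(j,R)∈𝔅} (f_j + R). -/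

import Mathlib

/-!
Level `r` of the hierarchy is a `4 * 5 ^ r`-net of the facilities of cost at most `5 ^ (r + 1)`,
and each net point is attached to a point of the next net within `4 * 5 ^ (r + 1)`. These steps
telescope, so a node of level `r` lies within `5 * 5 ^ r` of all its descendants. Every point `x`
is attached to a lowest node whose `5 * 5 ^ r`-ball contains it, and the area of a node is the set
of points attached below it; laminarity is then automatic. A ball `B(j, R)` is covered by the areas
of the net points within `6 * 5 ^ r` of `j` on the level `r` with `5 ^ r ≈ max R (f j)`: by the
doubling property there are at most `2 ^ (2κ)` of them, each costing at most `12 * 5 ^ r`.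
-/

open Metric Finset Function

def DoublingDimLE (V : Type*) [MetricSpace V] (κ : ℕ) : Prop :=
  ∀ (x : V) (R : ℝ), 0 < R → ∃ T : Finset V, #T ≤ 2 ^ κ ∧
    closedBall x R ⊆ ⋃ y ∈ T, closedBall y (R / 2)

section

variable {V : Type*} [MetricSpace V]

theorem DoublingDimLE.exists_cover_pow {κ : ℕ} (hV : DoublingDimLE V κ) (k : ℕ) (x : V)
    {R : ℝ} (hR : 0 < R) :
    ∃ T : Finset V, #T ≤ 2 ^ (k * κ) ∧
      closedBall x R ⊆ ⋃ y ∈ T, closedBall y (R / 2 ^ k) := by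
  classical
  induction k with
  | zero => exact ⟨{x}, by simp, by simp⟩
  | succ k ih =>
    obtain ⟨T, hcard, hcov⟩ := ih
    choose T' hT'card hT'cov using fun y : V => hV y (R / 2 ^ k) (by positivity)
    refine ⟨T.biUnion T', ?_, fun z hz => ?_⟩
    · calc #(T.biUnion T') ≤ #T * 2 ^ κ :=
            card_biUnion_le_card_mul _ _ _ fun y _ => hT'card y
        _ ≤ 2 ^ (k * κ) * 2 ^ κ := Nat.mul_le_mul_right _ hcard
        _ = 2 ^ ((k + 1) * κ) := by ring
    · obtain ⟨y, hy, hzy⟩ := Set.mem_iUnion₂.1 (hcov hz)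
      obtain ⟨w, hw, hzw⟩ := Set.mem_iUnion₂.1 (hT'cov y hzy)
      refine Set.mem_iUnion₂.2 ⟨w, mem_biUnion.2 ⟨y, hy, hw⟩, ?_⟩
      rwa [pow_succ, ← div_div]

theorem DoublingDimLE.card_le_of_pairwise_lt_dist {κ : ℕ} (hV : DoublingDimLE V κ) (k : ℕ)
    {c : V} {R : ℝ} (hR : 0 < R) {T : Finset V} (hT : ∀ p ∈ T, dist p c ≤ R)
    (hsep : (T : Set V).Pairwise fun p q => 2 * (R / 2 ^ k) < dist p q) :
    #T ≤ 2 ^ (k * κ) := by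
  obtain ⟨Y, hYcard, hYcov⟩ := hV.exists_cover_pow k c hR
  have hnear : ∀ p ∈ T, ∃ y ∈ Y, dist p y ≤ R / 2 ^ k := fun p hp => by
    simpa using hYcov (mem_closedBall.2 (hT p hp))
  choose! g hgY hg using hnear
  refine (card_le_card_of_injOn g hgY fun p hp q hq hpq => ?_).trans hYcard
  by_contra hne
  have hq' : dist q (g p) ≤ R / 2 ^ k := hpq ▸ hg q hq
  linarith [hsep hp hq hne, dist_triangle_right p q (g p), hg p hp]

theorem Finset.exists_separated_net (s : Finset V) {ε : ℝ} (hε : 0 ≤ ε) :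
    ∃ N ⊆ s, (N : Set V).Pairwise (fun p q => ε < dist p q) ∧
      ∀ x ∈ s, ∃ p ∈ N, dist x p ≤ ε := by
  classical
  obtain ⟨N, hN⟩ := (s.powerset.filter fun N : Finset V =>
    (N : Set V).Pairwise (fun p q => ε < dist p q)).exists_maximal ⟨∅, by simp⟩
  simp only [mem_filter, mem_powerset] at hN
  refine ⟨N, hN.prop.1, hN.prop.2, fun x hx => ?_⟩
  by_contra! hfar
  have hins : insert x N ⊆ s ∧
      ((insert x N : Finset V) : Set V).Pairwise (fun p q => ε < dist p q) := by
    refine ⟨insert_subset hx hN.prop.1, ?_⟩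
    rw [coe_insert]
    exact hN.prop.2.insert fun q hq _ => ⟨hfar q hq, dist_comm x q ▸ hfar q hq⟩
  have hxN : x ∈ N := hN.eq_of_ge hins (subset_insert x N) ▸ mem_insert_self x N
  exact (hfar x hxN).not_ge (by simpa using hε)

theorem Finset.sum_biUnion_le_sum_sum {ι β M : Type*} [DecidableEq β] [AddCommMonoid M]
    [PartialOrder M] [IsOrderedAddMonoid M] {s : Finset ι} {t : ι → Finset β} {g : β → M}
    (hg : ∀ x ∈ s.biUnion t, 0 ≤ g x) : ∑ x ∈ s.biUnion t, g x ≤ ∑ i ∈ s, ∑ x ∈ t i, g x := by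
  have h : s.biUnion t = (s.sigma t).image Sigma.snd := by ext; simp
  rw [h] at hg ⊢
  exact (sum_image_le_of_nonneg hg).trans_eq (sum_sigma s t _)

theorem Function.exists_iterate_eq_or_exists_iterate_eq {α : Type*} (f : α → α) (a : α)
    (k m : ℕ) :
    (∃ n, f^[n] (f^[k] a) = f^[m] a) ∨ ∃ n, f^[n] (f^[m] a) = f^[k] a := by
  rcases le_total k m with h | h
  · exact Or.inl ⟨m - k, by rw [← iterate_add_apply, Nat.sub_add_cancel h]⟩
  · exact Or.inr ⟨k - m, by rw [← iterate_add_apply, Nat.sub_add_cancel h]⟩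

section TreeArea

variable {α X : Type*} (parent : α → α) (leaf : X → α)

def treeArea (u : α) : Set X := {x | ∃ k, parent^[k] (leaf x) = u}

variable {parent leaf} {u v : α}

theorem treeArea_subset_iterate (m : ℕ) :
    treeArea parent leaf u ⊆ treeArea parent leaf (parent^[m] u) := by
  rintro x ⟨k, rfl⟩
  exact ⟨m + k, iterate_add_apply _ _ _ _⟩

theorem treeArea_subset_parent : treeArea parent leaf u ⊆ treeArea parent leaf (parent u) :=
  treeArea_subset_iterate 1

theorem exists_iterate_eq_or_of_mem_treeArea {x : X} (hu : x ∈ treeArea parent leaf u)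
    (hv : x ∈ treeArea parent leaf v) : (∃ n, parent^[n] u = v) ∨ ∃ n, parent^[n] v = u := by
  obtain ⟨k, rfl⟩ := hu
  obtain ⟨m, rfl⟩ := hv
  exact exists_iterate_eq_or_exists_iterate_eq parent (leaf x) k m

theorem treeArea_inter_eq_empty (hvu : ¬ ∃ n, parent^[n] v = u)
    (huv : ¬ ∃ n, parent^[n] u = v) :
    treeArea parent leaf u ∩ treeArea parent leaf v = ∅ :=
  Set.eq_empty_iff_forall_notMem.2 fun _ hx =>
    (exists_iterate_eq_or_of_mem_treeArea hx.1 hx.2).elim huv hvu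

theorem treeArea_laminar : treeArea parent leaf u ∩ treeArea parent leaf v = ∅ ∨
    treeArea parent leaf u ⊆ treeArea parent leaf v ∨
      treeArea parent leaf v ⊆ treeArea parent leaf u := by
  rcases (treeArea parent leaf u ∩ treeArea parent leaf v).eq_empty_or_nonempty with h | ⟨x, hx⟩
  · exact Or.inl h
  rcases exists_iterate_eq_or_of_mem_treeArea hx.1 hx.2 with ⟨n, rfl⟩ | ⟨n, rfl⟩
  · exact Or.inr (Or.inl (treeArea_subset_iterate n))
  · exact Or.inr (Or.inr (treeArea_subset_iterate n))

end TreeArea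

structure FacilityNets (F : Finset V) (f : V → ℝ) (ρmax : ℤ) where
  net : ℤ → Finset V
  root : V
  net_subset : ∀ r, net r ⊆ F
  net_top : net ρmax = {root}
  cost_le : ∀ r, ∀ p ∈ net r, f p ≤ 5 ^ (r + 1)
  separated : ∀ r, (net r : Set V).Pairwise fun p q => 4 * 5 ^ r < dist p q
  exists_near : ∀ r, ∀ j ∈ F, f j ≤ 5 ^ (r + 1) → ∃ p ∈ net r, dist j p ≤ 4 * 5 ^ r

theorem FacilityNets.nonempty {F : Finset V} {f : V → ℝ} {ρmax : ℤ} {j₀ : V} (hj₀ : j₀ ∈ F)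
    (hfj₀ : f j₀ ≤ 5 ^ (ρmax + 1)) (hV : ∀ x y : V, dist x y ≤ 5 ^ ρmax) :
    Nonempty (FacilityNets F f ρmax) := by
  choose N hNsub hNsep hNnear using fun r : ℤ =>
    (F.filter fun j => f j ≤ 5 ^ (r + 1)).exists_separated_net (ε := 4 * 5 ^ r) (by positivity)
  refine ⟨⟨fun r => if r < ρmax then N r else {j₀}, j₀, ?_, ?_, ?_, ?_, ?_⟩⟩
  · intro r
    split_ifs
    · exact (hNsub r).trans (filter_subset _ _)
    · simpa using hj₀
  · simp
  · intro r p hp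
    split_ifs at hp with hr
    · exact (mem_filter.1 (hNsub r hp)).2
    · rw [mem_singleton.1 hp]
      exact hfj₀.trans (zpow_le_zpow_right₀ (by norm_num) (by omega))
  · intro r
    split_ifs
    · exact hNsep r
    · simp
  · intro r j hj hfj
    split_ifs with hr
    · exact hNnear r j (mem_filter.2 ⟨hj, hfj⟩)
    · refine ⟨j₀, mem_singleton_self _, (hV j j₀).trans ?_⟩
      linarith [zpow_le_zpow_right₀ (by norm_num : (1 : ℝ) ≤ 5) (not_lt.1 hr),
        zpow_pos (by norm_num : (0 : ℝ) < 5) r]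

namespace FacilityNets

variable {F : Finset V} {f : V → ℝ} {ρmax ρmin r : ℤ} {u : V × ℤ} {p j x : V}
  (H : FacilityNets F f ρmax)

noncomputable def parent (u : V × ℤ) : V × ℤ :=
  if h : u.2 < ρmax ∧ ∃ q ∈ H.net (u.2 + 1), dist u.1 q ≤ 4 * 5 ^ (u.2 + 1) then
    (h.2.choose, u.2 + 1)
  else (H.root, ρmax)

open Classical in
noncomputable def nodes (ρmin : ℤ) : Finset (V × ℤ) :=
  (Icc ρmin ρmax).biUnion fun r => H.net r ×ˢ {r}

theorem mem_nodes : u ∈ H.nodes ρmin ↔ u.1 ∈ H.net u.2 ∧ ρmin ≤ u.2 ∧ u.2 ≤ ρmax := by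
  obtain ⟨p, r⟩ := u
  simp [nodes]
  tauto

theorem root_mem_nodes (hρ : ρmin ≤ ρmax) : (H.root, ρmax) ∈ H.nodes ρmin :=
  H.mem_nodes.2 ⟨by simp [H.net_top], hρ, le_rfl⟩

theorem eq_root_of_mem_net (hu : u.1 ∈ H.net u.2) (h : u.2 = ρmax) : u = (H.root, ρmax) := by
  rw [h, H.net_top, mem_singleton] at hu
  exact Prod.ext hu h

theorem parent_root : H.parent (H.root, ρmax) = (H.root, ρmax) := by
  simp [parent]

theorem exists_parent_eq (hp : p ∈ H.net r) (hr : r < ρmax) :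
    ∃ q ∈ H.net (r + 1), dist p q ≤ 4 * 5 ^ (r + 1) ∧ H.parent (p, r) = (q, r + 1) := by
  have hex : ∃ q ∈ H.net (r + 1), dist p q ≤ 4 * 5 ^ (r + 1) :=
    H.exists_near _ p (H.net_subset r hp)
      ((H.cost_le r p hp).trans (zpow_le_zpow_right₀ (by norm_num) (by omega)))
  exact ⟨hex.choose, hex.choose_spec.1, hex.choose_spec.2, by simp [parent, hr, hex]⟩

theorem parent_cases (hu : u ∈ H.nodes ρmin) :
    (u = (H.root, ρmax) ∧ H.parent u = u) ∨ (u.2 < ρmax ∧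
      ∃ q ∈ H.net (u.2 + 1), dist u.1 q ≤ 4 * 5 ^ (u.2 + 1) ∧ H.parent u = (q, u.2 + 1)) := by
  obtain ⟨hnet, -, hle⟩ := H.mem_nodes.1 hu
  rcases hle.lt_or_eq with hlt | heq
  · exact Or.inr ⟨hlt, H.exists_parent_eq hnet hlt⟩
  · obtain rfl := H.eq_root_of_mem_net hnet heq
    exact Or.inl ⟨rfl, H.parent_root⟩

theorem parent_mem_nodes (hu : u ∈ H.nodes ρmin) : H.parent u ∈ H.nodes ρmin := by
  rcases H.parent_cases hu with ⟨-, h⟩ | ⟨hlt, q, hq, -, h⟩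
  · rwa [h]
  · obtain ⟨-, hmin, -⟩ := H.mem_nodes.1 hu
    rw [h]
    exact H.mem_nodes.2 ⟨hq, by dsimp only; omega, by dsimp only; omega⟩

theorem level_parent (hu : u ∈ H.nodes ρmin) : (H.parent u).2 = min (u.2 + 1) ρmax := by
  rcases H.parent_cases hu with ⟨rfl, h⟩ | ⟨hlt, q, -, -, h⟩
  · rw [h]; simp
  · rw [h]; dsimp only; omega

-- The parent steps `4 * 5 ^ (r + 1) = 5 * 5 ^ (r + 1) - 5 * 5 ^ r` telescope.
theorem dist_parent_le (hu : u ∈ H.nodes ρmin) :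
    dist u.1 (H.parent u).1 + 5 * 5 ^ u.2 ≤ 5 * 5 ^ (H.parent u).2 := by
  rcases H.parent_cases hu with ⟨-, h⟩ | ⟨-, q, -, hq, h⟩
  · rw [h]; simp
  · rw [h]
    dsimp only
    rw [zpow_add_one₀ (by norm_num)] at hq ⊢
    linarith

theorem iterate_parent_mem_nodes (hu : u ∈ H.nodes ρmin) (k : ℕ) :
    H.parent^[k] u ∈ H.nodes ρmin :=
  Set.MapsTo.iterate (fun _ hv => H.parent_mem_nodes hv) k hu

theorem level_iterate_parent (hu : u ∈ H.nodes ρmin) (k : ℕ) :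
    (H.parent^[k] u).2 = min (u.2 + k) ρmax := by
  induction k with
  | zero => simp [(H.mem_nodes.1 hu).2.2]
  | succ k ih =>
    rw [iterate_succ_apply', H.level_parent (H.iterate_parent_mem_nodes hu k), ih]
    push_cast
    omega

theorem dist_iterate_parent_le (hu : u ∈ H.nodes ρmin) (k : ℕ) :
    dist u.1 (H.parent^[k] u).1 + 5 * 5 ^ u.2 ≤ 5 * 5 ^ (H.parent^[k] u).2 := by
  induction k with
  | zero => simp
  | succ k ih =>
    rw [iterate_succ_apply']
    linarith [H.dist_parent_le (H.iterate_parent_mem_nodes hu k),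
      dist_triangle u.1 (H.parent^[k] u).1 (H.parent (H.parent^[k] u)).1]

theorem iterate_parent_eq_root (hu : u ∈ H.nodes ρmin) :
    H.parent^[(ρmax - u.2).toNat] u = (H.root, ρmax) := by
  obtain ⟨-, -, hle⟩ := H.mem_nodes.1 hu
  refine H.eq_root_of_mem_net (H.mem_nodes.1 (H.iterate_parent_mem_nodes hu _)).1 ?_
  rw [H.level_iterate_parent hu]
  omega

theorem parent_spec_of_ne_root (hu : u ∈ H.nodes ρmin) (hne : u ≠ (H.root, ρmax)) :
    H.parent u ∈ H.nodes ρmin ∧ (H.parent u).2 = u.2 + 1 ∧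
      closedBall u.1 (7 * 5 ^ u.2) ⊆ closedBall (H.parent u).1 (7 * 5 ^ (H.parent u).2) := by
  refine ⟨H.parent_mem_nodes hu, ?_⟩
  rcases H.parent_cases hu with ⟨h, -⟩ | ⟨-, q, -, hq, h⟩
  · exact absurd h hne
  · rw [h]
    refine ⟨rfl, closedBall_subset_closedBall' ?_⟩
    rw [zpow_add_one₀ (by norm_num)] at hq ⊢
    linarith [zpow_pos (by norm_num : (0 : ℝ) < 5) u.2]

theorem ncard_children_le {κ : ℕ} (hV : DoublingDimLE V κ) :
    {w | w ∈ H.nodes ρmin ∧ w ≠ u ∧ H.parent w = u}.ncard ≤ 2 ^ (4 * κ) := by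
  set T := (H.net (u.2 - 1)).filter fun q => dist q u.1 ≤ 4 * 5 ^ u.2
  have hsub : {w | w ∈ H.nodes ρmin ∧ w ≠ u ∧ H.parent w = u} ⊆ ↑(T ×ˢ {u.2 - 1}) := by
    rintro w ⟨hw, hwu, hpar⟩
    rcases H.parent_cases hw with ⟨-, h⟩ | ⟨-, q, -, hq, h⟩
    · exact absurd (h.symm.trans hpar) hwu
    · rw [h] at hpar
      subst hpar
      refine mem_product.2 ⟨mem_filter.2 ⟨?_, hq⟩, mem_singleton.2 (by simp)⟩
      simpa using (H.mem_nodes.1 hw).1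
  have h5 : (5 : ℝ) ^ u.2 = 5 ^ (u.2 - 1) * 5 := by
    rw [← zpow_add_one₀ (by norm_num), sub_add_cancel]
  have hT : #T ≤ 2 ^ (4 * κ) := by
    refine hV.card_le_of_pairwise_lt_dist 4 (by positivity)
      (fun q hq => (mem_filter.1 hq).2) ?_
    refine ((H.separated _).mono (coe_subset.2 (filter_subset _ _))).mono' fun p q hpq => ?_
    rw [h5]
    linarith [zpow_pos (by norm_num : (0 : ℝ) < 5) (u.2 - 1)]
  calc _ ≤ (↑(T ×ˢ {u.2 - 1}) : Set (V × ℤ)).ncard :=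
        Set.ncard_le_ncard hsub (finite_toSet _)
    _ ≤ 2 ^ (4 * κ) := by rwa [Set.ncard_coe_finset, card_product, card_singleton, mul_one]

structure IsLeafMap (ρmin : ℤ) (leaf : V → V × ℤ) : Prop where
  mem_nodes : ∀ x, leaf x ∈ H.nodes ρmin
  dist_le : ∀ x, dist x (leaf x).1 ≤ 5 * 5 ^ (leaf x).2
  level_le : ∀ x, ∀ v ∈ H.nodes ρmin, dist x v.1 ≤ 5 * 5 ^ v.2 → (leaf x).2 ≤ v.2

theorem exists_isLeafMap (hV : ∀ x y : V, dist x y ≤ 5 ^ ρmax) (hρ : ρmin ≤ ρmax) :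
    ∃ leaf, H.IsLeafMap ρmin leaf := by
  have hex : ∀ x, ∃ u ∈ H.nodes ρmin, dist x u.1 ≤ 5 * 5 ^ u.2 ∧
      ∀ v ∈ H.nodes ρmin, dist x v.1 ≤ 5 * 5 ^ v.2 → u.2 ≤ v.2 := fun x => by
    have hroot : dist x H.root ≤ 5 * 5 ^ ρmax := by
      linarith [hV x H.root, zpow_pos (by norm_num : (0 : ℝ) < 5) ρmax]
    obtain ⟨u, hu, hmin⟩ := ((H.nodes ρmin).filter fun v => dist x v.1 ≤ 5 * 5 ^ v.2)
      |>.exists_min_image Prod.snd ⟨_, mem_filter.2 ⟨H.root_mem_nodes hρ, hroot⟩⟩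
    rw [mem_filter] at hu
    exact ⟨u, hu.1, hu.2, fun v hv hxv => hmin v (mem_filter.2 ⟨hv, hxv⟩)⟩
  choose leaf hmem hdist hmin using hex
  exact ⟨leaf, ⟨hmem, hdist, hmin⟩⟩

variable {H} {leaf : V → V × ℤ}

theorem IsLeafMap.treeArea_subset_closedBall (hleaf : H.IsLeafMap ρmin leaf) :
    treeArea H.parent leaf u ⊆ closedBall u.1 (5 * 5 ^ u.2) := by
  rintro x ⟨k, rfl⟩
  exact mem_closedBall.2 <| by
    linarith [hleaf.dist_le x, H.dist_iterate_parent_le (hleaf.mem_nodes x) k,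
      dist_triangle x (leaf x).1 (H.parent^[k] (leaf x)).1]

theorem IsLeafMap.exists_mem_treeArea (hleaf : H.IsLeafMap ρmin leaf) (hr₁ : ρmin ≤ r)
    (hr₂ : r ≤ ρmax) (hp : p ∈ H.net r) (hxp : dist x p ≤ 5 * 5 ^ r) :
    ∃ w ∈ H.nodes ρmin, w.2 = r ∧ x ∈ treeArea H.parent leaf w := by
  have hlevel := hleaf.level_le x (p, r) (H.mem_nodes.2 ⟨hp, hr₁, hr₂⟩) hxp
  refine ⟨_, H.iterate_parent_mem_nodes (hleaf.mem_nodes x) (r - (leaf x).2).toNat, ?_, _, rfl⟩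
  rw [H.level_iterate_parent (hleaf.mem_nodes x)]
  omega

variable (H) in
open Classical in
noncomputable def nodesNear (r : ℤ) (j : V) : Finset (V × ℤ) :=
  (H.net r).filter (fun p => dist p j ≤ 6 * 5 ^ r) ×ˢ {r}

theorem nodesNear_subset_nodes (hr₁ : ρmin ≤ r) (hr₂ : r ≤ ρmax) :
    H.nodesNear r j ⊆ H.nodes ρmin := by
  intro u hu
  simp only [nodesNear, mem_product, mem_filter, mem_singleton] at hu
  obtain ⟨⟨hnet, -⟩, hlevel⟩ := hu
  exact H.mem_nodes.2 ⟨hlevel ▸ hnet, by omega, by omega⟩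

theorem sum_cost_nodesNear_le {κ : ℕ} (hV : DoublingDimLE V κ) :
    ∑ u ∈ H.nodesNear r j, (f u.1 + 7 * 5 ^ u.2) ≤ 2 ^ (2 * κ) * (12 * 5 ^ r) := by
  have h5 := zpow_pos (by norm_num : (0 : ℝ) < 5) r
  have hcard : #((H.net r).filter fun p => dist p j ≤ 6 * 5 ^ r) ≤ 2 ^ (2 * κ) := by
    refine hV.card_le_of_pairwise_lt_dist 2 (by positivity)
      (fun q hq => (mem_filter.1 hq).2) ?_
    refine ((H.separated r).mono (coe_subset.2 (filter_subset _ _))).mono' fun p q hpq => ?_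
    linarith
  have hterm : ∀ u ∈ H.nodesNear r j, f u.1 + 7 * 5 ^ u.2 ≤ 12 * 5 ^ r := by
    intro u hu
    simp only [nodesNear, mem_product, mem_filter, mem_singleton] at hu
    obtain ⟨⟨hnet, -⟩, hlevel⟩ := hu
    have hcost := H.cost_le _ _ hnet
    rw [zpow_add_one₀ (by norm_num)] at hcost
    rw [hlevel]
    linarith
  calc _ ≤ #(H.nodesNear r j) • (12 * 5 ^ r) := sum_le_card_nsmul _ _ _ hterm
    _ ≤ 2 ^ (2 * κ) * (12 * 5 ^ r) := by
      rw [nsmul_eq_mul]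
      gcongr
      simpa [nodesNear] using (Nat.cast_le (α := ℝ)).2 hcard

theorem IsLeafMap.closedBall_subset_iUnion_treeArea (hleaf : H.IsLeafMap ρmin leaf)
    (hr₁ : ρmin ≤ r) (hr₂ : r ≤ ρmax) (hj : ∃ p ∈ H.net r, dist j p ≤ 4 * 5 ^ r) :
    closedBall j (5 ^ r) ⊆ ⋃ u ∈ H.nodesNear r j, treeArea H.parent leaf u := by
  obtain ⟨p, hp, hjp⟩ := hj
  intro x hx
  have hxj := mem_closedBall.1 hx
  obtain ⟨w, hw, hlevel, hxw⟩ :=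
    hleaf.exists_mem_treeArea (x := x) hr₁ hr₂ hp (by linarith [dist_triangle x j p])
  have hwx := mem_closedBall.1 (hleaf.treeArea_subset_closedBall hxw)
  refine Set.mem_iUnion₂.2 ⟨w, ?_, hxw⟩
  refine mem_product.2
    ⟨mem_filter.2 ⟨hlevel ▸ (H.mem_nodes.1 hw).1, ?_⟩, mem_singleton.2 hlevel⟩
  rw [hlevel] at hwx
  linarith [dist_triangle w.1 x j, dist_comm x w.1]

theorem exists_level (hV : ∀ x y : V, dist x y ≤ 5 ^ ρmax) (hρ : ρmin ≤ ρmax)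
    (hf : ∀ j ∈ F, 5 ^ ρmin ≤ f j) (hj : j ∈ F) {R : ℝ} (hR : 0 ≤ R) :
    ∃ r, ρmin ≤ r ∧ r ≤ ρmax ∧ closedBall j R ⊆ closedBall j (5 ^ r) ∧
      (∃ p ∈ H.net r, dist j p ≤ 4 * 5 ^ r) ∧ 5 ^ r ≤ 5 * (f j + R) := by
  have hfj : 5 ^ ρmin ≤ f j := hf j hj
  have hpos := zpow_pos (by norm_num : (0 : ℝ) < 5) ρmin
  set M := max R (f j)
  have hM : 0 < M := lt_max_of_lt_right (by linarith)
  set c := Int.clog 5 M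
  have hMc : M ≤ 5 ^ c := by exact_mod_cast Int.self_le_zpow_clog (by norm_num : 1 < 5) M
  have hcM : (5 : ℝ) ^ (c - 1) < M := by
    exact_mod_cast Int.zpow_pred_clog_lt_self (by norm_num) hM
  have hρc : ρmin ≤ c := by
    have : (5 : ℝ) ^ (ρmin - 1) < M :=
      (zpow_lt_zpow_right₀ (by norm_num) (by omega)).trans_le (hfj.trans (le_max_right _ _))
    have hlt := (Int.zpow_lt_iff_lt_clog (by norm_num : 1 < 5) hM).1 (by exact_mod_cast this)
    omega
  refine ⟨min c ρmax, by omega, min_le_right _ _, ?_, ?_, ?_⟩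
  · rcases min_cases c ρmax with ⟨h, -⟩ | ⟨h, -⟩
    · rw [h]
      exact closedBall_subset_closedBall ((le_max_left _ _).trans hMc)
    · rw [h]
      exact fun x _ => mem_closedBall.2 (hV x j)
  · rcases min_cases c ρmax with ⟨h, hc⟩ | ⟨h, -⟩
    · rw [h]
      exact H.exists_near c j hj
        ((le_max_right _ _).trans (hMc.trans (zpow_le_zpow_right₀ (by norm_num) (by omega))))
    · rw [h, H.net_top]
      refine ⟨H.root, mem_singleton_self _, ?_⟩
      linarith [hV j H.root, zpow_pos (by norm_num : (0 : ℝ) < 5) ρmax]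
  · have hc : (5 : ℝ) ^ c = 5 ^ (c - 1) * 5 := by
      rw [← zpow_add_one₀ (by norm_num), sub_add_cancel]
    have hMfR : M ≤ f j + R := max_le (by linarith) (by linarith)
    linarith [zpow_le_zpow_right₀ (by norm_num : (1 : ℝ) ≤ 5) (min_le_left c ρmax)]

theorem IsLeafMap.exists_subset_cover {κ : ℕ} (hleaf : H.IsLeafMap ρmin leaf)
    (hdoub : DoublingDimLE V κ) (hV : ∀ x y : V, dist x y ≤ 5 ^ ρmax) (hρ : ρmin ≤ ρmax)
    (hf : ∀ j ∈ F, 5 ^ ρmin ≤ f j) {C : Set V} {𝔅 : Finset (V × ℝ)}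
    (h𝔅 : ∀ b ∈ 𝔅, b.1 ∈ F ∧ 0 ≤ b.2) (hC : C ⊆ ⋃ b ∈ 𝔅, closedBall b.1 b.2) :
    ∃ S ⊆ H.nodes ρmin, (C ⊆ ⋃ u ∈ S, treeArea H.parent leaf u) ∧
      ∑ u ∈ S, (f u.1 + 7 * 5 ^ u.2) ≤ 80 * 2 ^ (2 * κ) * ∑ b ∈ 𝔅, (f b.1 + b.2) := by
  classical
  choose! r hr₁ hr₂ hball hnear hcost using fun b (hb : b ∈ 𝔅) =>
    H.exists_level hV hρ hf (h𝔅 b hb).1 (h𝔅 b hb).2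
  refine ⟨𝔅.biUnion fun b => H.nodesNear (r b) b.1,
    biUnion_subset.2 fun b hb => nodesNear_subset_nodes (hr₁ b hb) (hr₂ b hb), ?_, ?_⟩
  · intro x hx
    obtain ⟨b, hb, hxb⟩ := Set.mem_iUnion₂.1 (hC hx)
    obtain ⟨u, hu, hxu⟩ := Set.mem_iUnion₂.1 <| hleaf.closedBall_subset_iUnion_treeArea
      (hr₁ b hb) (hr₂ b hb) (hnear b hb) (hball b hb hxb)
    exact Set.mem_iUnion₂.2 ⟨u, mem_biUnion.2 ⟨b, hb, hu⟩, hxu⟩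
  have hnonneg : ∀ u ∈ 𝔅.biUnion fun b => H.nodesNear (r b) b.1,
      0 ≤ f u.1 + 7 * 5 ^ u.2 := by
    intro u hu
    obtain ⟨b, hb, hu⟩ := mem_biUnion.1 hu
    have hu := H.mem_nodes.1 (nodesNear_subset_nodes (hr₁ b hb) (hr₂ b hb) hu)
    linarith [hf _ (H.net_subset _ hu.1), zpow_pos (by norm_num : (0 : ℝ) < 5) ρmin,
      zpow_pos (by norm_num : (0 : ℝ) < 5) u.2]
  calc _ ≤ ∑ b ∈ 𝔅, ∑ u ∈ H.nodesNear (r b) b.1, (f u.1 + 7 * 5 ^ u.2) :=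
        sum_biUnion_le_sum_sum hnonneg
    _ ≤ ∑ b ∈ 𝔅, 80 * 2 ^ (2 * κ) * (f b.1 + b.2) := by
      refine sum_le_sum fun b hb => (H.sum_cost_nodesNear_le hdoub).trans ?_
      have hfb : 0 ≤ f b.1 + b.2 := by
        linarith [hf _ (h𝔅 b hb).1, (h𝔅 b hb).2, zpow_pos (by norm_num : (0 : ℝ) < 5) ρmin]
      have hrb := hcost b hb
      have h2 : (0 : ℝ) ≤ 2 ^ (2 * κ) := by positivity
      nlinarith
    _ = 80 * 2 ^ (2 * κ) * ∑ b ∈ 𝔅, (f b.1 + b.2) := (mul_sum _ _ _).symm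

end FacilityNets

end

theorem stmt_6_general {V : Type*} [MetricSpace V] (κ : ℕ)
    (hdoub : ∀ (x : V) (R : ℝ), 0 < R → ∃ T : Finset V, T.card ≤ 2 ^ κ ∧
      Metric.closedBall x R ⊆ ⋃ y ∈ T, Metric.closedBall y (R / 2))
    (W : ℝ) (hdiam : ∀ x y : V, dist x y ≤ W)
    (F : Finset V) (hF : F.Nonempty)
    (f : V → ℝ)
    (fmin : ℝ) (hfmin : fmin = F.inf' hF f)
    (ρmin ρmax : ℤ)
    (hρmin : (5 : ℝ) ^ ρmin ≤ fmin ∧ ∀ r : ℤ, (5 : ℝ) ^ r ≤ fmin → r ≤ ρmin)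
    (hρmax : W ≤ (5 : ℝ) ^ ρmax ∧ ∀ r : ℤ, W ≤ (5 : ℝ) ^ r → ρmax ≤ r)
    (hρ : ρmin ≤ ρmax) :
    ∃ (P : Finset (V × ℤ)) (j₀ : V) (parent : V × ℤ → V × ℤ)
      (A : V × ℤ → Set V),
      (∀ u ∈ P, u.1 ∈ F ∧ ρmin ≤ u.2 ∧ u.2 ≤ ρmax) ∧
      (j₀, ρmax) ∈ P ∧
      -- (1) tree structure: root fixpoint, parent goes one level up with
      -- nesting of balls, height ≤ ρmax − ρmin, degree ≤ 2^(4κ)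
      parent (j₀, ρmax) = (j₀, ρmax) ∧
      (∀ u ∈ P, u ≠ (j₀, ρmax) →
        parent u ∈ P ∧ (parent u).2 = u.2 + 1 ∧
        Metric.closedBall u.1 (7 * 5 ^ u.2) ⊆
          Metric.closedBall (parent u).1 (7 * 5 ^ (parent u).2)) ∧
      (∀ u ∈ P, ∃ k : ℕ, k ≤ (ρmax - ρmin).toNat ∧
        parent^[k] u = (j₀, ρmax)) ∧
      (∀ u ∈ P, {w : V × ℤ | w ∈ P ∧ w ≠ u ∧ parent w = u}.ncard ≤ 2 ^ (4 * κ)) ∧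
      -- (2) areas: contained in balls, monotone along parents, disjoint
      -- unless related by ancestry; in particular laminar
      (∀ u ∈ P, A u ⊆ Metric.closedBall u.1 (7 * 5 ^ u.2)) ∧
      (∀ u ∈ P, A u ⊆ A (parent u)) ∧
      (∀ u ∈ P, ∀ v ∈ P, (¬ ∃ m : ℕ, parent^[m] v = u) →
        (¬ ∃ m : ℕ, parent^[m] u = v) → A u ∩ A v = ∅) ∧
      (∀ u ∈ P, ∀ v ∈ P, A u ∩ A v = ∅ ∨ A u ⊆ A v ∨ A v ⊆ A u) ∧
      -- (3) approximate covering by areas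
      (∀ (C : Set V) (𝔅 : Finset (V × ℝ)),
        (∀ b ∈ 𝔅, b.1 ∈ F ∧ 0 ≤ b.2) →
        (C ⊆ ⋃ b ∈ 𝔅, Metric.closedBall b.1 b.2) →
        ∃ S : Finset (V × ℤ), S ⊆ P ∧ (C ⊆ ⋃ u ∈ S, A u) ∧
          ∑ u ∈ S, (f u.1 + 7 * 5 ^ u.2) ≤
            80 * 2 ^ (2 * κ) * ∑ b ∈ 𝔅, (f b.1 + b.2)) := by
  obtain ⟨j₀, hj₀, hfj₀⟩ := F.exists_mem_eq_inf' hF f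
  have hf : ∀ j ∈ F, (5 : ℝ) ^ ρmin ≤ f j := fun j hj => hρmin.1.trans (hfmin ▸ F.inf'_le f hj)
  have hV : ∀ x y : V, dist x y ≤ 5 ^ ρmax := fun x y => (hdiam x y).trans hρmax.1
  -- `ρmin` is maximal, so the cheapest facility is cheaper than `5 ^ (ρmin + 1)`.
  have hroot_cost : f j₀ ≤ 5 ^ (ρmax + 1) := by
    have : fmin < 5 ^ (ρmin + 1) := not_le.1 fun h => by linarith [hρmin.2 _ h]
    rw [hfmin, hfj₀] at this
    exact this.le.trans (zpow_le_zpow_right₀ (by norm_num) (by omega))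
  obtain ⟨H⟩ := FacilityNets.nonempty hj₀ hroot_cost hV
  obtain ⟨leaf, hleaf⟩ := H.exists_isLeafMap hV hρ
  refine ⟨H.nodes ρmin, H.root, H.parent, treeArea H.parent leaf,
    fun u hu => ?_, H.root_mem_nodes hρ, H.parent_root,
    fun u hu hne => H.parent_spec_of_ne_root hu hne,
    fun u hu => ⟨_, ?_, H.iterate_parent_eq_root hu⟩, fun u _ => H.ncard_children_le hdoub, fun u _ => ?_, fun u _ => treeArea_subset_parent,
    fun u _ v _ => treeArea_inter_eq_empty, fun u _ v _ => treeArea_laminar,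
    fun C 𝔅 h𝔅 hC => hleaf.exists_subset_cover hdoub hV hρ hf h𝔅 hC⟩
  · obtain ⟨hnet, hu⟩ := H.mem_nodes.1 hu
    exact ⟨H.net_subset _ hnet, hu⟩
  · have hlevel := (H.mem_nodes.1 hu).2.1
    omega
  · refine hleaf.treeArea_subset_closedBall.trans (closedBall_subset_closedBall ?_)
    linarith [zpow_pos (by norm_num : (0 : ℝ) < 5) u.2]

/-- Theorem `areas-structure`: existence of the set of pairs
`Π`, the root, the parent map (abstract tree `𝒯`) and the laminar family of
areas, with bounded height, bounded degree, nesting of balls, areas contained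
in balls, laminarity, and the `O(2^(2κ))`-approximate covering property. -/
theorem stmt_6 {V : Type*} [MetricSpace V] (κ : ℕ)
    (hdoub : ∀ (x : V) (R : ℝ), 0 < R → ∃ T : Finset V, T.card ≤ 2 ^ κ ∧
      Metric.closedBall x R ⊆ ⋃ y ∈ T, Metric.closedBall y (R / 2))
    (W : ℝ) (hW : 0 < W) (hdiam : ∀ x y : V, dist x y ≤ W)
    (F : Finset V) (hF : F.Nonempty)
    (f : V → ℝ) (hf : ∀ j ∈ F, 0 < f j)
    (fmin : ℝ) (hfmin : fmin = F.inf' hF f)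
    (ρmin ρmax : ℤ)
    (hρmin : (5 : ℝ) ^ ρmin ≤ fmin ∧ ∀ r : ℤ, (5 : ℝ) ^ r ≤ fmin → r ≤ ρmin)
    (hρmax : W ≤ (5 : ℝ) ^ ρmax ∧ ∀ r : ℤ, W ≤ (5 : ℝ) ^ r → ρmax ≤ r)
    (hρ : ρmin ≤ ρmax) :
    ∃ (P : Finset (V × ℤ)) (j₀ : V) (parent : V × ℤ → V × ℤ)
      (A : V × ℤ → Set V),
      (∀ u ∈ P, u.1 ∈ F ∧ ρmin ≤ u.2 ∧ u.2 ≤ ρmax) ∧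
      (j₀, ρmax) ∈ P ∧
      -- (1) tree structure: root fixpoint, parent goes one level up with
      -- nesting of balls, height ≤ ρmax − ρmin, degree ≤ 2^(4κ)
      parent (j₀, ρmax) = (j₀, ρmax) ∧
      (∀ u ∈ P, u ≠ (j₀, ρmax) →
        parent u ∈ P ∧ (parent u).2 = u.2 + 1 ∧
        Metric.closedBall u.1 (7 * 5 ^ u.2) ⊆
          Metric.closedBall (parent u).1 (7 * 5 ^ (parent u).2)) ∧
      (∀ u ∈ P, ∃ k : ℕ, k ≤ (ρmax - ρmin).toNat ∧
        parent^[k] u = (j₀, ρmax)) ∧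
      (∀ u ∈ P, {w : V × ℤ | w ∈ P ∧ w ≠ u ∧ parent w = u}.ncard ≤ 2 ^ (4 * κ)) ∧
      -- (2) areas: contained in balls, monotone along parents, disjoint
      -- unless related by ancestry; in particular laminar
      (∀ u ∈ P, A u ⊆ Metric.closedBall u.1 (7 * 5 ^ u.2)) ∧
      (∀ u ∈ P, A u ⊆ A (parent u)) ∧
      (∀ u ∈ P, ∀ v ∈ P, (¬ ∃ m : ℕ, parent^[m] v = u) →
        (¬ ∃ m : ℕ, parent^[m] u = v) → A u ∩ A v = ∅) ∧
      (∀ u ∈ P, ∀ v ∈ P, A u ∩ A v = ∅ ∨ A u ⊆ A v ∨ A v ⊆ A u) ∧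
      -- (3) approximate covering by areas
      (∀ (C : Set V) (𝔅 : Finset (V × ℝ)),
        (∀ b ∈ 𝔅, b.1 ∈ F ∧ 0 ≤ b.2) →
        (C ⊆ ⋃ b ∈ 𝔅, Metric.closedBall b.1 b.2) →
        ∃ S : Finset (V × ℤ), S ⊆ P ∧ (C ⊆ ⋃ u ∈ S, A u) ∧
          ∑ u ∈ S, (f u.1 + 7 * 5 ^ u.2) ≤
            80 * 2 ^ (2 * κ) * ∑ b ∈ 𝔅, (f b.1 + b.2)) :=
  stmt_6_general κ hdoub W hdiam F hF f fmin hfmin ρmin ρmax hρmin hρmax hρ
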